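/- Let Φ : C → D be an exact, fully faithful functor between abelian categories in which every object has finite length, such that Φ sends irreducible objects to irreducible objects. Then for every object E of C and every subobject F of Φ(E) in D, there exists a subobject E' of E in C with Φ(E') ≅ F (i.e. the essential image of Φ is closed under taking subobjects). -/

import Mathlib

open CategoryTheory CategoryTheory.Limits

section Helpers

variable {A : Type*} [Category A] [Abelian A]

/-- If `ι : S ⟶ X` is a kernel of `q : X ⟶ Q`, then for any `i : E ⟶ Q`, the canonical map
`S ⟶ pullback q i` is a kernel of `pullback.snd q i`. -/
noncomputable def pullbackSndKernel {S X Q E : A} (ι : S ⟶ X) [Mono ι] (q : X ⟶ Q)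
    (hιq : ι ≫ q = 0) (hker : IsLimit (KernelFork.ofι ι hιq)) (i : E ⟶ Q) :
    IsLimit (KernelFork.ofι
      (pullback.lift ι 0 (by rw [hιq, zero_comp]) : S ⟶ pullback q i)
      (pullback.lift_snd _ _ _)) := by
  have hmono : Mono (pullback.lift ι 0 (by rw [hιq, zero_comp]) : S ⟶ pullback q i) :=
    mono_of_mono_fac (pullback.lift_fst _ _ _)
  refine KernelFork.IsLimit.ofι' _ _ (fun {W} k hk => ?_)
  have h1 : (k ≫ pullback.fst q i) ≫ q = 0 := by
    rw [Category.assoc, pullback.condition, ← Category.assoc, hk, zero_comp]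
  obtain ⟨l, hl⟩ := KernelFork.IsLimit.lift' hker (k ≫ pullback.fst q i) h1
  refine ⟨l, ?_⟩
  apply pullback.hom_ext
  · rw [Category.assoc]
    erw [pullback.lift_fst]
    simpa using hl
  · rw [Category.assoc]
    erw [pullback.lift_snd]
    simpa using hk.symm

lemma kernelSubobject_lt_of_kernel {E X Q S : A} (p : E ⟶ X) [Epi p] (ι : S ⟶ X) [Mono ι]
    (q : X ⟶ Q) (hιq : ι ≫ q = 0) (hS : ¬ IsZero S) :
    kernelSubobject p < kernelSubobject (p ≫ q) := by
  refine lt_of_le_of_ne (kernelSubobject_comp_le p q) (fun heq => hS ?_)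
  have hcond : pullback.snd ι p ≫ (p ≫ q) = 0 := by
    rw [← Category.assoc, ← pullback.condition, Category.assoc, hιq, comp_zero]
  have hfac : (kernelSubobject (p ≫ q)).Factors (pullback.snd ι p) :=
    kernelSubobject_factors _ _ hcond
  rw [← heq] at hfac
  have h0 : pullback.snd ι p ≫ p = 0 := by
    rw [← Subobject.factorThru_arrow _ _ hfac, Category.assoc, kernelSubobject_arrow_comp,
      comp_zero]
  have h1 : pullback.fst ι p ≫ ι = 0 := by rw [pullback.condition, h0]
  have h2 : (pullback.fst ι p : pullback ι p ⟶ S) = 0 := zero_of_comp_mono ι h1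
  have h3 : (𝟙 S) = 0 := by
    rw [← cancel_epi (pullback.fst ι p), Category.comp_id, h2, zero_comp]
  exact (IsZero.iff_id_eq_zero S).mpr h3

end Helpers

theorem phi_sub_aux {C D : Type*} [Category C] [Category D] [Abelian C] [Abelian D]
    [∀ X : C, IsNoetherianObject X] [∀ X : C, IsArtinianObject X]
    (Φ : C ⥤ D) [Φ.Additive] [PreservesFiniteLimits Φ] [PreservesFiniteColimits Φ]
    [Φ.Full] [Φ.Faithful]
    (hsimple : ∀ E : C, Simple E → Simple (Φ.obj E)) (E : C) :
    ∀ (K : Subobject E) (X : C) (p : E ⟶ X), Epi p → kernelSubobject p = K →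
      ∀ (F : D) (f : F ⟶ Φ.obj X), Mono f →
        ∃ (E' : C) (i : E' ⟶ X), Mono i ∧ ∃ e : Φ.obj E' ≅ F, e.hom ≫ f = Φ.map i := fun K =>
  (wellFounded_gt (α := Subobject E)).induction
    (C := fun K => ∀ (X : C) (p : E ⟶ X), Epi p → kernelSubobject p = K →
      ∀ (F : D) (f : F ⟶ Φ.obj X), Mono f →
        ∃ (E' : C) (i : E' ⟶ X), Mono i ∧ ∃ e : Φ.obj E' ≅ F, e.hom ≫ f = Φ.map i)
    K <| fun K IH X p hp hK F f hf => by
    haveI := hp; haveI := hf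
    by_cases hX : IsZero X
    · -- `X` is zero, hence so are `Φ.obj X` and `F`.
      have hΦX : IsZero (Φ.obj X) := Φ.map_isZero hX
      have hF : IsZero F := by
        rw [IsZero.iff_id_eq_zero, ← cancel_mono f]
        simp [hΦX.eq_zero_of_tgt f]
      exact ⟨X, 𝟙 X, inferInstance, hΦX.iso hF, hΦX.eq_of_src _ _⟩
    · -- pick a simple subobject `S` of `X`
      obtain ⟨Y, hYs⟩ := exists_simple_subobject hX
      haveI := hYs
      set S : C := (Y : C) with hS
      set ι : S ⟶ X := Y.arrow with hι
      set Q : C := cokernel ι with hQ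
      set q : X ⟶ Q := cokernel.π ι with hq
      have hιq : ι ≫ q = 0 := cokernel.condition ι
      have hker : IsLimit (KernelFork.ofι ι hιq) :=
        Abelian.monoIsKernelOfCokernel (CokernelCofork.ofπ q (cokernel.condition ι))
          (cokernelIsCokernel ι)
      -- the image short exact sequence
      have hSE : (ShortComplex.mk ι q hιq).ShortExact :=
        { exact := ShortComplex.exact_of_f_is_kernel _ hker }
      have hSED : ((ShortComplex.mk ι q hιq).map Φ).ShortExact := hSE.map_of_exact Φ
      haveI := hSED.mono_f
      haveI := hSED.epi_g
      haveI hmono_Φι : Mono (Φ.map ι) := hSED.mono_f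
      haveI hepi_Φq : Epi (Φ.map q) := hSED.epi_g
      have hιqD : Φ.map ι ≫ Φ.map q = 0 := by rw [← Φ.map_comp, hιq, Φ.map_zero]
      have hkerD : IsLimit (KernelFork.ofι (Φ.map ι) hιqD) := hSED.exact.fIsKernel
      haveI hΦS : Simple (Φ.obj S) := hsimple S hYs
      haveI : Epi (p ≫ q) := epi_comp p q
      have hSnz : ¬ IsZero S := Simple.not_isZero S
      have hlt : K < kernelSubobject (p ≫ q) := by
        rw [← hK]; exact kernelSubobject_lt_of_kernel p ι q hιq hSnz
      by_cases hz : (pullback.snd f (Φ.map ι) : pullback f (Φ.map ι) ⟶ Φ.obj S) = 0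
      · -- CASE B : `F ∩ Φ S = 0`.
        haveI hmono_fq : Mono (f ≫ Φ.map q) := by
          refine Preadditive.mono_of_cancel_zero _ (fun {W} g hg => ?_)
          obtain ⟨w, hw⟩ := KernelFork.IsLimit.lift' hkerD (g ≫ f)
            (by rw [Category.assoc]; exact hg)
          have hw' : w ≫ Φ.map ι = g ≫ f := by simpa using hw
          have hlift : pullback.lift g w hw'.symm ≫ pullback.snd f (Φ.map ι) = w :=
            pullback.lift_snd _ _ _
          rw [hz, comp_zero] at hlift
          exact zero_of_comp_mono f (by rw [← hw', ← hlift, zero_comp])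
        obtain ⟨E'', i'', hi'', e'', he''⟩ :=
          IH _ hlt Q (p ≫ q) inferInstance rfl F (f ≫ Φ.map q) hmono_fq
        haveI := hi''
        set P : C := pullback q i'' with hP
        set a : P ⟶ X := pullback.fst q i'' with ha
        haveI : Mono a := inferInstance
        set PB : D := pullback (Φ.map q) (Φ.map i'') with hPB
        set φ : Φ.obj P ≅ PB := PreservesPullback.iso Φ q i'' with hφ
        have hcomm : f ≫ Φ.map q = e''.inv ≫ Φ.map i'' := by
          rw [← he'', ← Category.assoc, e''.inv_hom_id, Category.id_comp]
        set s : F ⟶ PB := pullback.lift f e''.inv hcomm with hs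
        have hsfst : s ≫ pullback.fst (Φ.map q) (Φ.map i'') = f := pullback.lift_fst _ _ _
        have hssnd : s ≫ pullback.snd (Φ.map q) (Φ.map i'') = e''.inv := pullback.lift_snd _ _ _
        have hκ := pullbackSndKernel (Φ.map ι) (Φ.map q) hιqD hkerD (Φ.map i'')
        set κ : Φ.obj S ⟶ PB := pullback.lift (Φ.map ι) 0 (by rw [hιqD, zero_comp]) with hκdef
        have hκfst : κ ≫ pullback.fst (Φ.map q) (Φ.map i'') = Φ.map ι := pullback.lift_fst _ _ _
        haveI hκmono : Mono κ := mono_of_mono_fac hκfst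
        set ρ : PB ⟶ PB :=
          𝟙 PB - pullback.snd (Φ.map q) (Φ.map i'') ≫ e''.hom ≫ s with hρdef
        have hρ : ρ ≫ pullback.snd (Φ.map q) (Φ.map i'') = 0 := by
          rw [hρdef, Preadditive.sub_comp, Category.id_comp, Category.assoc, Category.assoc,
            hssnd, e''.hom_inv_id, Category.comp_id, sub_self]
        obtain ⟨r, hr⟩ := KernelFork.IsLimit.lift' hκ ρ hρ
        have hr' : r ≫ κ = ρ := by simpa using hr
        obtain ⟨u, hu⟩ := Φ.map_surjective (φ.hom ≫ r)
        refine ⟨kernel u, kernel.ι u ≫ a, mono_comp _ _, ?_⟩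
        have hsρ : s ≫ ρ = 0 := by
          rw [hρdef, Preadditive.comp_sub, Category.comp_id, ← Category.assoc, hssnd,
            ← Category.assoc, e''.inv_hom_id, Category.id_comp, sub_self]
        have hsr : s ≫ r = 0 := by
          rw [← cancel_mono κ, Category.assoc, hr', hsρ, zero_comp]
        have hs0 : (s ≫ φ.inv) ≫ Φ.map u = 0 := by
          rw [hu, Category.assoc, Iso.inv_hom_id_assoc, hsr]
        haveI hsmono : Mono s := mono_of_mono_fac hssnd
        haveI : Mono (s ≫ φ.inv) := mono_comp _ _
        have hlim : IsLimit (KernelFork.ofι (s ≫ φ.inv) hs0) := by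
          refine KernelFork.IsLimit.ofι' _ _ (fun {W} k hk => ?_)
          have hkr : (k ≫ φ.hom) ≫ r = 0 := by
            rw [Category.assoc, ← hu]; exact hk
          have hwρ : (k ≫ φ.hom) ≫ ρ = 0 := by
            rw [← hr', ← Category.assoc, hkr, zero_comp]
          rw [hρdef, Preadditive.comp_sub, Category.comp_id, sub_eq_zero] at hwρ
          refine ⟨k ≫ φ.hom ≫ pullback.snd (Φ.map q) (Φ.map i'') ≫ e''.hom, ?_⟩
          have hfac : (k ≫ φ.hom ≫ pullback.snd (Φ.map q) (Φ.map i'') ≫ e''.hom) ≫ s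
              = k ≫ φ.hom := by
            conv_rhs => rw [hwρ]
            simp only [Category.assoc]
          rw [← Category.assoc, hfac, Category.assoc, φ.hom_inv_id, Category.comp_id]
        set hcp := IsLimit.conePointUniqueUpToIso (kernelIsKernel (Φ.map u)) hlim with hcpdef
        have h1 : hcp.hom ≫ (s ≫ φ.inv) = kernel.ι (Φ.map u) := by
          simpa using
            IsLimit.conePointUniqueUpToIso_hom_comp (kernelIsKernel (Φ.map u)) hlim
              WalkingParallelPair.zero
        have h2 : hcp.hom ≫ s = kernel.ι (Φ.map u) ≫ φ.hom := by
          calc hcp.hom ≫ s = (hcp.hom ≫ s ≫ φ.inv) ≫ φ.hom := by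
                simp only [Category.assoc, Iso.inv_hom_id, Category.comp_id]
            _ = kernel.ι (Φ.map u) ≫ φ.hom := by rw [h1]
        have h3 : φ.hom ≫ pullback.fst (Φ.map q) (Φ.map i'') = Φ.map a :=
          PreservesPullback.iso_hom_fst Φ q i''
        have h4 : (PreservesKernel.iso Φ u).hom ≫ kernel.ι (Φ.map u) = Φ.map (kernel.ι u) := by
          rw [PreservesKernel.iso_hom]; exact kernelComparison_comp_ι u Φ
        refine ⟨(PreservesKernel.iso Φ u) ≪≫ hcp, ?_⟩
        rw [Iso.trans_hom, Category.assoc, ← hsfst, ← Category.assoc hcp.hom, h2, Φ.map_comp]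
        rw [Category.assoc, h3, ← Category.assoc, h4]
      · -- CASE A : `Φ S ⊆ F`.
        haveI : IsIso (pullback.snd f (Φ.map ι) : pullback f (Φ.map ι) ⟶ Φ.obj S) :=
          isIso_of_mono_of_nonzero hz
        set m : Φ.obj S ⟶ F := inv (pullback.snd f (Φ.map ι)) ≫ pullback.fst f (Φ.map ι)
          with hm
        haveI : Mono m := mono_comp _ _
        have hmf : m ≫ f = Φ.map ι := by
          rw [hm, Category.assoc, pullback.condition, ← Category.assoc, IsIso.inv_hom_id,
            Category.id_comp]
        set π : F ⟶ cokernel m := cokernel.π m with hπ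
        have hmfq : m ≫ f ≫ Φ.map q = 0 := by
          rw [← Category.assoc, hmf, hιqD]
        set f' : cokernel m ⟶ Φ.obj Q := cokernel.desc m (f ≫ Φ.map q) hmfq with hf'
        have hπf' : π ≫ f' = f ≫ Φ.map q := cokernel.π_desc _ _ _
        have hmono_f' : Mono f' := by
          refine Preadditive.mono_of_cancel_zero _ (fun {W} g hg => ?_)
          have hWcond : (pullback.snd g π ≫ f) ≫ Φ.map q = 0 := by
            rw [Category.assoc, ← hπf', ← Category.assoc, ← pullback.condition,
              Category.assoc, hg, comp_zero]
          obtain ⟨w, hw⟩ := KernelFork.IsLimit.lift' hkerD (pullback.snd g π ≫ f) hWcond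
          have hw' : w ≫ Φ.map ι = pullback.snd g π ≫ f := by simpa using hw
          have hwm : w ≫ m = pullback.snd g π := by
            rw [← cancel_mono f, Category.assoc, hmf, hw']
          have h5 : pullback.fst g π ≫ g = 0 := by
            rw [pullback.condition, ← hwm, Category.assoc, cokernel.condition, comp_zero]
          haveI : Epi (pullback.fst g π) := inferInstance
          rwa [← cancel_epi (pullback.fst g π), comp_zero]
        obtain ⟨E'', i'', hi'', e'', he''⟩ :=
          IH _ hlt Q (p ≫ q) inferInstance rfl (cokernel m) f' hmono_f'
        haveI := hi''
        set P : C := pullback q i'' with hP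
        set a : P ⟶ X := pullback.fst q i'' with ha
        haveI : Mono a := inferInstance
        set PB : D := pullback (Φ.map q) (Φ.map i'') with hPB
        set φ : Φ.obj P ≅ PB := PreservesPullback.iso Φ q i'' with hφ
        have hcomm : f ≫ Φ.map q = (π ≫ e''.inv) ≫ Φ.map i'' := by
          rw [Category.assoc, ← he'', ← Category.assoc e''.inv, e''.inv_hom_id,
            Category.id_comp, hπf']
        set v : F ⟶ PB := pullback.lift f (π ≫ e''.inv) hcomm with hv
        have hvfst : v ≫ pullback.fst (Φ.map q) (Φ.map i'') = f := pullback.lift_fst _ _ _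
        have hvsnd : v ≫ pullback.snd (Φ.map q) (Φ.map i'') = π ≫ e''.inv :=
          pullback.lift_snd _ _ _
        have hκ := pullbackSndKernel (Φ.map ι) (Φ.map q) hιqD hkerD (Φ.map i'')
        set κ : Φ.obj S ⟶ PB := pullback.lift (Φ.map ι) 0 (by rw [hιqD, zero_comp]) with hκdef
        have hmv : m ≫ v = κ := by
          apply pullback.hom_ext
          · rw [Category.assoc, hvfst, hmf, hκdef, pullback.lift_fst]
          · rw [Category.assoc, hvsnd, hκdef, pullback.lift_snd, ← Category.assoc,
              cokernel.condition, zero_comp]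
        have hcoker := Abelian.epiIsCokernelOfKernel _ hκ
        have hepi_v : Epi v := by
          refine Preadditive.epi_of_cancel_zero _ (fun {W} g hg => ?_)
          have hκg : κ ≫ g = 0 := by rw [← hmv, Category.assoc, hg, comp_zero]
          obtain ⟨h', hh'⟩ := CokernelCofork.IsColimit.desc' hcoker g hκg
          have hh'' : pullback.snd (Φ.map q) (Φ.map i'') ≫ h' = g := by simpa using hh'
          have h6 : π ≫ e''.inv ≫ h' = 0 := by
            rw [← Category.assoc, ← hvsnd, Category.assoc, hh'', hg]
          have h7 : e''.inv ≫ h' = 0 := by rwa [← cancel_epi π, comp_zero]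
          have h'0 : h' = 0 := by rwa [← cancel_epi e''.inv, comp_zero]
          rw [← hh'', h'0, comp_zero]
        haveI : Mono v := mono_of_mono_fac hvfst
        haveI : Epi v := hepi_v
        haveI : IsIso v := isIso_of_mono_of_epi v
        refine ⟨P, a, inferInstance, φ ≪≫ (asIso v).symm, ?_⟩
        have h8 : inv v ≫ f = pullback.fst (Φ.map q) (Φ.map i'') := by
          rw [← hvfst, IsIso.inv_hom_id_assoc]
        rw [Iso.trans_hom, Iso.symm_hom, asIso_inv, Category.assoc, h8,
          PreservesPullback.iso_hom_fst]

/-- Let `Φ : C ⥤ D` be an exact, fully faithful functor between abelian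
categories in which every object has finite length (i.e. is both Noetherian and Artinian),
such that `Φ` sends irreducible (simple) objects to irreducible objects. Then for every
object `E` of `C` and every subobject `F` of `Φ(E)` in `D`, there exists a subobject `E'`
of `E` in `C` with `Φ(E') ≅ F`: the essential image of `Φ` is closed under subobjects. -/
theorem stmt_0 {C D : Type*} [Category C] [Category D] [Abelian C] [Abelian D]
    [∀ X : C, IsNoetherianObject X] [∀ X : C, IsArtinianObject X]
    [∀ Y : D, IsNoetherianObject Y] [∀ Y : D, IsArtinianObject Y]
    (Φ : C ⥤ D) [Φ.Additive] [Limits.PreservesFiniteLimits Φ]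
    [Limits.PreservesFiniteColimits Φ] [Φ.Full] [Φ.Faithful]
    (hsimple : ∀ E : C, Simple E → Simple (Φ.obj E))
    (E : C) (F : Subobject (Φ.obj E)) :
    ∃ E' : Subobject E, Nonempty ((Φ.obj (E' : C)) ≅ (F : D)) := by
  obtain ⟨E', i, hi, e, -⟩ := phi_sub_aux Φ hsimple E (kernelSubobject (𝟙 E)) E (𝟙 E)
    inferInstance rfl (F : D) F.arrow inferInstance
  haveI := hi
  exact ⟨Subobject.mk i, ⟨Φ.mapIso (Subobject.underlyingIso i) ≪≫ e⟩⟩
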